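/- arXiv:2211.15865 — 4 statements merged into one kernel-verified Lean document; each statement's English description precedes it below -/
import Mathlib

section
/- (van der Corput sublevel-set estimate) Let Q_λ(x) = Σ_{0≤|α|≤d} λ_α x^α be a real polynomial on ℝᵐ, and set ⟦λ⟧ = Σ_{1≤|α|≤d}|λ_α| + |Q_λ(0)|. Then for every ρ > 0, the Lebesgue measure of {x ∈ B₁(ℝᵐ) : |Q_λ(x)| ≤ ρ} is at most C(m,d)·ρ^{1/d}·⟦λ⟧^{-1/d}. -/
/-!
The coefficient norm `⟦λ⟧` is controlled by `|Q_λ|` at a single point of the unit ball: the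
coefficients of a polynomial of degree `≤ d` are recovered from its values on a grid of
`(d+1)^m` points in the ball by inverting a Vandermonde matrix in each variable, so some `x₀`
in the ball has `|Q_λ(x₀)| ≥ c ⟦λ⟧`.

Every ray from `x₀` meets the sublevel set in a subset of `[-2, 2]` on which the one-variable
polynomial `p(r) = Q_λ(x₀ + r ω)` satisfies `|p| ≤ ρ`, while `|p(0)| ≥ c ⟦λ⟧`. If that subset
has length `s`, it contains `d + 1` points with mutual distances `≥ s / (d+1)`, and Lagrange
interpolation at them gives `c ⟦λ⟧ ≤ (d+1) (2(d+1)/s)^d ρ`, i.e. `s ≲ (ρ / ⟦λ⟧)^{1/d}`.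
Integrating in polar coordinates around `x₀` gives the estimate.
-/

open Function MeasureTheory Set Metric Polynomial
open scoped ENNReal

section Grid

-- `(k : Fin (n + 1))` is `k` reduced mod `n + 1`; below it is only applied to `k ≤ n`.
open Fin.NatCast

variable {n : ℕ} {t : Fin (n + 1) → ℝ}

theorem sum_inv_vandermonde_mul_pow (ht : Injective t) {k l : ℕ} (hk : k ≤ n) (hl : l ≤ n) :
    ∑ a, (Matrix.vandermonde t)⁻¹ (k : Fin (n + 1)) a * t a ^ l = if k = l then 1 else 0 := by
  have hV := Matrix.nonsing_inv_mul _ (isUnit_iff_ne_zero.2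
    (Matrix.det_vandermonde_ne_zero_iff.2 ht))
  have := congr_fun (congr_fun hV (k : Fin (n + 1))) (l : Fin (n + 1))
  simp only [Matrix.mul_apply, Matrix.vandermonde_apply, Matrix.one_apply, Fin.ext_iff,
    Fin.val_cast_of_lt (Nat.lt_succ_of_le hk), Fin.val_cast_of_lt (Nat.lt_succ_of_le hl)] at this
  exact this

variable {ι : Type*} [Fintype ι] [DecidableEq ι]

theorem coeff_eq_sum_inv_vandermonde_mul_eval (ht : Injective t) {P : MvPolynomial ι ℝ} (hP : ∀ i, P.degreeOf i ≤ n)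
    {α : ι →₀ ℕ} (hα : ∀ i, α i ≤ n) :
    P.coeff α = ∑ g : ι → Fin (n + 1),
      (∏ i, (Matrix.vandermonde t)⁻¹ (α i : Fin (n + 1)) (g i)) *
        MvPolynomial.eval (fun i => t (g i)) P := by
  have hβ : ∀ β ∈ P.support, ∀ i, β i ≤ n := fun β hβ i =>
    (MvPolynomial.monomial_le_degreeOf i hβ).trans (hP i)
  calc P.coeff α = ∑ β ∈ P.support, P.coeff β * if α = β then 1 else 0 := by
        simp
    _ = ∑ β ∈ P.support,
          P.coeff β * ∏ i, ∑ a, (Matrix.vandermonde t)⁻¹ (α i : Fin (n + 1)) a * t a ^ β i := by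
        refine Finset.sum_congr rfl fun β hβP => ?_
        simp only [sum_inv_vandermonde_mul_pow ht (hα _) (hβ β hβP _), Finset.prod_boole,
          Finset.mem_univ, true_implies, ← Finsupp.ext_iff]
    _ = ∑ g : ι → Fin (n + 1), (∏ i, (Matrix.vandermonde t)⁻¹ (α i : Fin (n + 1)) (g i)) *
          ∑ β ∈ P.support, P.coeff β * ∏ i, t (g i) ^ β i := by
        simp only [Finset.mul_sum]
        rw [Finset.sum_comm]
        refine Finset.sum_congr rfl fun β _ => ?_
        rw [Fintype.prod_sum, Finset.mul_sum]
        refine Finset.sum_congr rfl fun g _ => ?_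
        rw [Finset.prod_mul_distrib]
        ring
    _ = _ := by simp only [MvPolynomial.eval_eq']

theorem exists_mul_sum_abs_coeff_le_abs_eval_grid (ht : Injective t) :
    ∃ c > 0, ∀ P : MvPolynomial ι ℝ, (∀ i, P.degreeOf i ≤ n) →
      ∃ g : ι → Fin (n + 1),
        c * ∑ α ∈ P.support, |P.coeff α| ≤ |MvPolynomial.eval (fun i => t (g i)) P| := by
  set L := (Matrix.vandermonde t)⁻¹
  set G : (ι → Fin (n + 1)) → ℝ := fun f => ∑ g : ι → Fin (n + 1), ∏ i, |L (f i) (g i)|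
  have hG : ∀ f, 0 ≤ G f := fun f => Finset.sum_nonneg fun g _ => by positivity
  set K := ∑ f, G f
  have hK : 0 ≤ K := Finset.sum_nonneg fun f _ => hG f
  refine ⟨(K + 1)⁻¹, by positivity, fun P hP => ?_⟩
  obtain ⟨g₀, -, hg₀⟩ := Finset.exists_max_image Finset.univ
    (fun g : ι → Fin (n + 1) => |MvPolynomial.eval (fun i => t (g i)) P|) Finset.univ_nonempty
  set V := |MvPolynomial.eval (fun i => t (g₀ i)) P|
  have hexp : ∀ α ∈ P.support, ∀ i, α i ≤ n := fun α hα i =>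
    (MvPolynomial.monomial_le_degreeOf i hα).trans (hP i)
  set φ : (ι →₀ ℕ) → ι → Fin (n + 1) := fun α i => (α i : Fin (n + 1))
  have hcoeff : ∀ α ∈ P.support, |P.coeff α| ≤ G (φ α) * V := fun α hα => by
    rw [coeff_eq_sum_inv_vandermonde_mul_eval ht hP (hexp α hα), Finset.sum_mul]
    refine (Finset.abs_sum_le_sum_abs _ _).trans (Finset.sum_le_sum fun g _ => ?_)
    rw [abs_mul, Finset.abs_prod]
    exact mul_le_mul_of_nonneg_left (hg₀ g (Finset.mem_univ g)) (by positivity)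
  have hφ : Set.InjOn φ P.support := fun α hα β hβ hαβ => Finsupp.ext fun i => by
    have := congr_arg Fin.val (congr_fun hαβ i)
    simpa [φ, Fin.val_cast_of_lt (Nat.lt_succ_of_le (hexp α hα i)),
      Fin.val_cast_of_lt (Nat.lt_succ_of_le (hexp β hβ i))] using this
  refine ⟨g₀, ?_⟩
  rw [inv_mul_le_iff₀ (by positivity)]
  calc ∑ α ∈ P.support, |P.coeff α| ≤ (∑ α ∈ P.support, G (φ α)) * V := by
        rw [Finset.sum_mul]; exact Finset.sum_le_sum hcoeff
    _ ≤ K * V := by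
        gcongr
        rw [← Finset.sum_image hφ]
        exact Finset.sum_le_sum_of_subset_of_nonneg (Finset.subset_univ _) fun f _ _ => hG f
    _ ≤ (K + 1) * V := by gcongr; linarith

end Grid

theorem norm_le_one_of_forall_abs_le_inv_card {ι : Type*} [Fintype ι] [Nonempty ι]
    {x : EuclideanSpace ℝ ι} (hx : ∀ i, |x i| ≤ (Fintype.card ι : ℝ)⁻¹) : ‖x‖ ≤ 1 := by
  have hcard : (0 : ℝ) < Fintype.card ι := by exact_mod_cast Fintype.card_pos
  rw [EuclideanSpace.norm_eq, Real.sqrt_le_one]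
  calc ∑ i, ‖x i‖ ^ 2 ≤ ∑ _i : ι, ((Fintype.card ι : ℝ)⁻¹) ^ 2 :=
        Finset.sum_le_sum fun i _ => pow_le_pow_left₀ (norm_nonneg _) (hx i) 2
    _ = (Fintype.card ι : ℝ)⁻¹ := by
        rw [Finset.sum_const, Finset.card_univ, nsmul_eq_mul]
        field_simp
    _ ≤ 1 := inv_le_one_of_one_le₀ (by exact_mod_cast Fintype.card_pos)

theorem exists_mul_sum_abs_coeff_le_abs_eval_unitBall {ι : Type*} [Fintype ι] [Nonempty ι] (d : ℕ) :
    ∃ c > 0, ∀ P : MvPolynomial ι ℝ, P.totalDegree ≤ d →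
      ∃ x : EuclideanSpace ℝ ι, ‖x‖ ≤ 1 ∧
        c * ∑ α ∈ P.support, |P.coeff α| ≤ |MvPolynomial.eval (fun i => x i) P| := by
  classical
  have hcard : (0 : ℝ) < Fintype.card ι := by exact_mod_cast Fintype.card_pos
  set t : Fin (d + 1) → ℝ := fun j => j / ((d + 1) * Fintype.card ι)
  have ht : Injective t := fun j k hjk => Fin.ext <| by
    simpa [t, div_left_inj' (by positivity : ((d : ℝ) + 1) * Fintype.card ι ≠ 0)] using hjk
  have htle (j : Fin (d + 1)) : |t j| ≤ (Fintype.card ι : ℝ)⁻¹ := by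
    rw [abs_of_nonneg (by positivity), div_le_iff₀ (by positivity), mul_comm,
      mul_assoc, mul_inv_cancel₀ hcard.ne', mul_one]
    exact_mod_cast j.is_le.trans (Nat.le_succ d)
  obtain ⟨c, hc, hcP⟩ := exists_mul_sum_abs_coeff_le_abs_eval_grid (ι := ι) ht
  refine ⟨c, hc, fun P hP => ?_⟩
  obtain ⟨g, hg⟩ := hcP P fun i => (P.degreeOf_le_totalDegree i).trans hP
  exact ⟨WithLp.toLp 2 fun i => t (g i),
    norm_le_one_of_forall_abs_le_inv_card fun i => htle (g i), hg⟩

theorem abs_eval_le_of_separated_nodes {n : ℕ} {p : ℝ[X]} (hp : p.natDegree ≤ n)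
    {x : Fin (n + 1) → ℝ} {y q R ρ : ℝ} (hq : 0 < q)
    (hsep : ∀ j k, j ≠ k → q ≤ |x j - x k|) (hR : ∀ j, |y - x j| ≤ R)
    (hval : ∀ j, |p.eval (x j)| ≤ ρ) :
    |p.eval y| ≤ (n + 1) * (R / q) ^ n * ρ := by
  have hx : Injective x := fun j k hjk => by
    by_contra hne
    have := hsep j k hne
    rw [hjk, sub_self, abs_zero] at this
    linarith
  have hdeg : p.degree < (Finset.univ : Finset (Fin (n + 1))).card := by
    rw [Finset.card_univ, Fintype.card_fin]
    exact (degree_le_natDegree).trans_lt (by exact_mod_cast Nat.lt_succ_of_le hp)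
  have hbasis (i : Fin (n + 1)) : |(Lagrange.basis Finset.univ x i).eval y| ≤ (R / q) ^ n := by
    rw [Lagrange.basis, eval_prod, Finset.abs_prod]
    calc ∏ j ∈ Finset.univ.erase i, |(Lagrange.basisDivisor (x i) (x j)).eval y|
        ≤ ∏ _j ∈ Finset.univ.erase i, R / q := by
          refine Finset.prod_le_prod (fun _ _ => abs_nonneg _) fun j hj => ?_
          have hqij := hsep i j (Finset.ne_of_mem_erase hj).symm
          simp only [Lagrange.basisDivisor, eval_mul, eval_C, eval_sub, eval_X, abs_mul, abs_inv]
          rw [div_eq_inv_mul]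
          exact mul_le_mul (inv_anti₀ hq hqij) (hR j) (abs_nonneg _) (by positivity)
      _ = (R / q) ^ n := by simp [Finset.prod_const, div_pow]
  have hρ : 0 ≤ ρ := (abs_nonneg _).trans (hval 0)
  rw [Lagrange.eq_interpolate hx.injOn hdeg, Lagrange.interpolate_apply, eval_finsetSum]
  calc |∑ i, (C (p.eval (x i)) * Lagrange.basis Finset.univ x i).eval y|
      ≤ ∑ i, |(C (p.eval (x i)) * Lagrange.basis Finset.univ x i).eval y| :=
        Finset.abs_sum_le_sum_abs _ _
    _ ≤ ∑ _i : Fin (n + 1), ρ * (R / q) ^ n := by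
        refine Finset.sum_le_sum fun i _ => ?_
        rw [eval_mul, eval_C, abs_mul]
        exact mul_le_mul (hval i) (hbasis i) (abs_nonneg _) hρ
    _ = (n + 1) * (R / q) ^ n * ρ := by
        rw [Finset.sum_const, Finset.card_univ, Fintype.card_fin, nsmul_eq_mul]
        push_cast
        ring

theorem lipschitzWith_volume_inter_Iic {A : Set ℝ} (hA : volume A ≠ ⊤) :
    LipschitzWith 1 fun t => (volume (A ∩ Iic t)).toReal := by
  have hfin (t : ℝ) : volume (A ∩ Iic t) ≠ ⊤ := measure_ne_top_of_subset inter_subset_left hA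
  refine LipschitzWith.of_le_add_mul 1 fun t u => ?_
  have hcover : A ∩ Iic t ⊆ (A ∩ Iic u) ∪ Ioc u t := fun z ⟨hzA, hzt⟩ =>
    (le_or_gt z u).imp (fun hzu => ⟨hzA, hzu⟩) fun hzu => ⟨hzu, hzt⟩
  have hle : volume (A ∩ Iic t) ≤ volume (A ∩ Iic u) + ENNReal.ofReal (t - u) :=
    (measure_mono hcover).trans ((measure_union_le _ _).trans_eq (by rw [Real.volume_Ioc]))
  calc (volume (A ∩ Iic t)).toReal
      ≤ (volume (A ∩ Iic u) + ENNReal.ofReal (t - u)).toReal :=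
        ENNReal.toReal_mono (by finiteness) hle
    _ = (volume (A ∩ Iic u)).toReal + max (t - u) 0 := by
        rw [ENNReal.toReal_add (hfin u) ENNReal.ofReal_ne_top, ENNReal.toReal_ofReal']
    _ ≤ (volume (A ∩ Iic u)).toReal + 1 * dist t u := by
        rw [one_mul, Real.dist_eq]
        gcongr
        exact max_le (le_abs_self _) (abs_nonneg _)

theorem exists_mem_volume_inter_Iic_eq {A : Set ℝ} (hA : IsCompact A) {c : ℝ} (hc : 0 < c)
    (hcA : c ≤ (volume A).toReal) : ∃ x ∈ A, (volume (A ∩ Iic x)).toReal = c := by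
  set F : ℝ → ℝ := fun t => (volume (A ∩ Iic t)).toReal
  have hFcont : Continuous F := (lipschitzWith_volume_inter_Iic hA.measure_lt_top.ne).continuous
  obtain ⟨a, ha⟩ := hA.bddBelow
  obtain ⟨b, hb⟩ := hA.bddAbove
  set S := {t | c ≤ F t}
  have hSa : ∀ t ∈ S, a ≤ t := fun t ht => by
    by_contra! hta
    have : A ∩ Iic t = ∅ := eq_empty_of_forall_notMem fun z ⟨hzA, hzt⟩ =>
      (lt_of_le_of_lt (ha hzA) (lt_of_le_of_lt hzt hta)).false
    simp only [S, mem_ofPred_eq, F, this, measure_empty, ENNReal.toReal_zero] at ht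
    linarith
  have hbS : b ∈ S := by
    simpa [S, F, inter_eq_left.2 fun z hz => (mem_Iic.2 (hb hz))] using hcA
  have hxS : sInf S ∈ S := (isClosed_le continuous_const hFcont).csInf_mem ⟨b, hbS⟩ ⟨a, hSa⟩
  have hinf : ∀ t ∈ S, sInf S ≤ t := fun t ht => csInf_le ⟨a, hSa⟩ ht
  -- `sInf S` is where `F` first reaches `c`; were it outside the closed set `A`, `F` would
  -- already take the same value a little to its left.
  refine ⟨sInf S, ?_, le_antisymm ?_ hxS⟩
  · by_contra hx
    obtain ⟨l, hl, hlA⟩ := exists_Ioc_subset_of_mem_nhds (hA.isClosed.isOpen_compl.mem_nhds hx)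
      ⟨a - 1, by linarith [hSa _ hxS]⟩
    have hsub : A ∩ Iic (sInf S) ⊆ A ∩ Iic l := fun z ⟨hzA, hzx⟩ =>
      ⟨hzA, not_lt.1 fun hlz => hlA ⟨hlz, hzx⟩ hzA⟩
    have hlS : l ∈ S := le_trans hxS <|
      ENNReal.toReal_mono (measure_ne_top_of_subset inter_subset_left hA.measure_lt_top.ne)
        (measure_mono hsub)
    exact absurd (hinf l hlS) (not_le.2 hl)
  · by_contra! hlt
    have : ∀ᶠ t in nhdsWithin (sInf S) (Iio (sInf S)), c < F t :=
      nhdsWithin_le_nhds (hFcont.continuousAt.eventually (lt_mem_nhds hlt))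
    obtain ⟨t, hct, htx⟩ := (this.and self_mem_nhdsWithin).exists
    exact absurd (hinf t hct.le) (not_le.2 htx)

theorem exists_separated_nodes {A : Set ℝ} (hA : IsCompact A) (hA0 : volume A ≠ 0) (n : ℕ) :
    ∃ x : Fin (n + 1) → ℝ, (∀ j, x j ∈ A) ∧
      ∀ j k, j ≠ k → (volume A).toReal / (n + 1) ≤ |x j - x k| := by
  -- `x j` is where the 1-Lipschitz function `t ↦ vol (A ∩ Iic t)` reaches `(j + 1) q`.
  set q := (volume A).toReal / (n + 1)
  have hq : 0 < q := div_pos (ENNReal.toReal_pos hA0 hA.measure_lt_top.ne) (by positivity)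
  have hnode (j : Fin (n + 1)) : ∃ x ∈ A, (volume (A ∩ Iic x)).toReal = (j + 1) * q := by
    refine exists_mem_volume_inter_Iic_eq hA (by positivity) ?_
    rw [show (volume A).toReal = (n + 1) * q by simp only [q]; field_simp]
    gcongr
    exact_mod_cast j.is_le
  choose x hxA hxF using hnode
  refine ⟨x, hxA, fun j k hjk => ?_⟩
  have hlip := (lipschitzWith_volume_inter_Iic hA.measure_lt_top.ne).dist_le_mul (x j) (x k)
  rw [hxF, hxF, Real.dist_eq, Real.dist_eq, NNReal.coe_one, one_mul, ← sub_mul, abs_mul,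
    abs_of_pos hq, add_sub_add_right_eq_sub] at hlip
  refine le_trans (le_mul_of_one_le_left hq.le ?_) hlip
  rcases (Fin.val_ne_of_ne hjk).lt_or_gt with h | h
  · have : ((j : ℕ) : ℝ) + 1 ≤ k := by exact_mod_cast h
    exact le_abs.2 (Or.inr (by linarith))
  · have : ((k : ℕ) : ℝ) + 1 ≤ j := by exact_mod_cast h
    exact le_abs.2 (Or.inl (by linarith))

theorem volume_Icc_inter_sublevel_le {d : ℕ} (hd : 1 ≤ d) {p : ℝ[X]} (hp : p.natDegree ≤ d)
    {R M : ℝ} (hM : 0 < M) (hp0 : M ≤ |p.eval 0|) (ρ : ℝ) :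
    volume (Icc (-R) R ∩ {t | |p.eval t| ≤ ρ}) ≤
      ENNReal.ofReal ((d + 1) * ((d + 1) * R ^ d * ρ / M) ^ (d : ℝ)⁻¹) := by
  set A := Icc (-R) R ∩ {t | |p.eval t| ≤ ρ}
  have hA : IsCompact A := isCompact_Icc.inter_right <|
    isClosed_le (continuous_abs.comp p.continuous) continuous_const
  rcases eq_or_ne (volume A) 0 with hA0 | hA0
  · simp [hA0]
  obtain ⟨x, hxA, hsep⟩ := exists_separated_nodes hA hA0 d
  set q := (volume A).toReal / (d + 1)
  have hq : 0 < q := div_pos (ENNReal.toReal_pos hA0 hA.measure_lt_top.ne) (by positivity)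
  have hinterp : |p.eval 0| ≤ (d + 1) * (R / q) ^ d * ρ :=
    abs_eval_le_of_separated_nodes hp hq hsep (fun j => by simpa [abs_le, and_comm] using (hxA j).1)
      fun j => (hxA j).2
  have hqd : q ^ d ≤ (d + 1) * R ^ d * ρ / M := by
    rw [le_div_iff₀ hM]
    calc q ^ d * M ≤ q ^ d * ((d + 1) * (R / q) ^ d * ρ) := by gcongr; exact hp0.trans hinterp
      _ = (d + 1) * (q * (R / q)) ^ d * ρ := by ring
      _ = (d + 1) * R ^ d * ρ := by rw [mul_div_cancel₀ R hq.ne']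
  have hqle : q ≤ ((d + 1) * R ^ d * ρ / M) ^ (d : ℝ)⁻¹ :=
    (Real.le_rpow_inv_iff_of_pos hq.le ((pow_nonneg hq.le d).trans hqd) (by positivity)).2
      (by exact_mod_cast hqd)
  rw [← ENNReal.ofReal_toReal hA.measure_lt_top.ne]
  refine ENNReal.ofReal_le_ofReal ?_
  calc (volume A).toReal = (d + 1) * q := by simp only [q]; field_simp
    _ ≤ _ := by gcongr

theorem measure_le_of_forall_ray_le {E : Type*} [NormedAddCommGroup E] [NormedSpace ℝ E]
    [FiniteDimensional ℝ E] [MeasurableSpace E] [BorelSpace E] [Nontrivial E]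
    (μ : Measure E) [μ.IsAddHaarMeasure] {A : Set E} (hA : MeasurableSet A) {R : ℝ}
    (hAR : A ⊆ closedBall 0 R) {s : ℝ≥0∞}
    (hs : ∀ ω ∈ sphere (0 : E) 1, volume {r : ℝ | 0 < r ∧ r • ω ∈ A} ≤ s) :
    μ A ≤ μ.toSphere univ * ENNReal.ofReal (R ^ (Module.finrank ℝ E - 1)) * s := by
  set n := Module.finrank ℝ E - 1
  set h := homeomorphUnitSphereProd E
  set A' : Set ({0}ᶜ : Set E) := Subtype.val ⁻¹' A
  set B := h.symm ⁻¹' A'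
  have hA' : MeasurableSet A' := measurable_subtype_coe hA
  have hB : MeasurableSet B := h.symm.measurable hA'
  have hμA : μ A = (μ.toSphere.prod (Measure.volumeIoiPow n)) B := by
    rw [← (μ.measurePreserving_homeomorphUnitSphereProd).measure_preimage hB.nullMeasurableSet,
      ← h.image_symm, h.symm.image_preimage,
      comap_subtype_coe_apply (measurableSet_singleton 0).compl, Subtype.image_preimage_coe,
      inter_comm, measure_inter_conull (by simp)]
  have hsection (ω : sphere (0 : E) 1) :
      Measure.volumeIoiPow n (Prod.mk ω ⁻¹' B) ≤ ENNReal.ofReal (R ^ n) * s := by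
    have hmem (r : Ioi (0 : ℝ)) (hr : r ∈ Prod.mk ω ⁻¹' B) : (r : ℝ) • (ω : E) ∈ A := hr
    have hrR (r : Ioi (0 : ℝ)) (hr : r ∈ Prod.mk ω ⁻¹' B) : (r : ℝ) ≤ R := by
      simpa [norm_smul, abs_of_pos (mem_Ioi.1 r.2)] using hAR (hmem r hr)
    rw [Measure.volumeIoiPow, withDensity_apply _ (measurable_prodMk_left hB)]
    calc ∫⁻ r in Prod.mk ω ⁻¹' B, ENNReal.ofReal ((r : ℝ) ^ n) ∂volume.comap Subtype.val
        ≤ ∫⁻ _r in Prod.mk ω ⁻¹' B, ENNReal.ofReal (R ^ n) ∂volume.comap Subtype.val :=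
          setLIntegral_mono measurable_const fun r hr =>
            ENNReal.ofReal_le_ofReal (pow_le_pow_left₀ r.2.le (hrR r hr) n)
      _ = ENNReal.ofReal (R ^ n) * volume (Subtype.val '' (Prod.mk ω ⁻¹' B)) := by
          rw [setLIntegral_const, comap_subtype_coe_apply measurableSet_Ioi, mul_comm]
      _ ≤ ENNReal.ofReal (R ^ n) * s := by
          gcongr
          refine (measure_mono ?_).trans (hs ω ω.2)
          rintro _ ⟨r, hr, rfl⟩
          exact ⟨r.2, hmem r hr⟩
  calc μ A = ∫⁻ ω, Measure.volumeIoiPow n (Prod.mk ω ⁻¹' B) ∂μ.toSphere := by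
        rw [hμA, Measure.prod_apply hB]
    _ ≤ ∫⁻ _ω, ENNReal.ofReal (R ^ n) * s ∂μ.toSphere := lintegral_mono hsection
    _ = _ := by rw [lintegral_const, mul_comm, mul_assoc]

noncomputable def restrictLine {σ R : Type*} [CommRing R] (P : MvPolynomial σ R) (x v : σ → R) :
    R[X] :=
  MvPolynomial.aeval (fun i => C (v i) * X + C (x i)) P

theorem eval_restrictLine {σ R : Type*} [CommRing R] (P : MvPolynomial σ R) (x v : σ → R)
    (t : R) : (restrictLine P x v).eval t = MvPolynomial.eval (x + t • v) P := by
  rw [restrictLine, ← coe_aeval_eq_eval, ← AlgHom.comp_apply, MvPolynomial.comp_aeval]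
  show MvPolynomial.eval₂ _ _ P = _
  congr 1
  funext i
  rw [map_add, map_mul, aeval_C, aeval_X, aeval_C]
  simp only [Algebra.algebraMap_self, RingHom.id_apply, Pi.add_apply, Pi.smul_apply, smul_eq_mul]
  ring

theorem natDegree_restrictLine_le {σ R : Type*} [CommRing R] (P : MvPolynomial σ R)
    (x v : σ → R) : (restrictLine P x v).natDegree ≤ P.totalDegree :=
  (MvPolynomial.aeval_natDegree_le P le_rfl _ fun _ => natDegree_linear_le).trans_eq (mul_one _)

theorem volume_sublevel_le_of_le_abs_eval {ι : Type*} [Fintype ι] [Nonempty ι] {d : ℕ}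
    (hd : 1 ≤ d) {P : MvPolynomial ι ℝ} (hP : P.totalDegree ≤ d) {x₀ : EuclideanSpace ℝ ι}
    (hx₀ : ‖x₀‖ ≤ 1) {M : ℝ} (hM : 0 < M) (hMx₀ : M ≤ |MvPolynomial.eval (fun i => x₀ i) P|)
    (ρ : ℝ) :
    volume {x : EuclideanSpace ℝ ι | ‖x‖ ≤ 1 ∧ |MvPolynomial.eval (fun i => x i) P| ≤ ρ} ≤
      (volume : Measure (EuclideanSpace ℝ ι)).toSphere univ *
        ENNReal.ofReal (2 ^ (Module.finrank ℝ (EuclideanSpace ℝ ι) - 1)) *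
        ENNReal.ofReal ((d + 1) * ((d + 1) * 2 ^ d * ρ / M) ^ (d : ℝ)⁻¹) := by
  set E := {x : EuclideanSpace ℝ ι | ‖x‖ ≤ 1 ∧ |MvPolynomial.eval (fun i => x i) P| ≤ ρ}
  have hE : IsClosed E := (isClosed_le continuous_norm continuous_const).inter <|
    isClosed_le (continuous_abs.comp <|
      (MvPolynomial.continuous_eval P).comp (PiLp.continuous_ofLp 2 _)) continuous_const
  rw [← measure_preimage_add _ x₀ E]
  refine measure_le_of_forall_ray_le _
    (hE.preimage (continuous_const_add x₀)).measurableSet (R := 2) ?_ fun ω hω => ?_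
  · intro y hy
    have := norm_sub_le (x₀ + y) x₀
    rw [add_sub_cancel_left] at this
    rw [mem_closedBall_zero_iff]
    linarith [hy.1]
  · set p := restrictLine P (fun i => x₀ i) (fun i => ω i)
    have hline (r : ℝ) : p.eval r = MvPolynomial.eval (fun i => (x₀ + r • ω) i) P := by
      rw [eval_restrictLine]
      rfl
    have hp0 : M ≤ |p.eval 0| := by simpa [hline] using hMx₀
    refine (measure_mono fun r hr => ?_).trans <| volume_Icc_inter_sublevel_le hd
      ((natDegree_restrictLine_le P _ _).trans hP) hM hp0 ρ
    obtain ⟨hxr, hPxr⟩ := hr.2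
    have hr2 : ‖r • ω‖ ≤ 2 := by
      have := norm_sub_le (x₀ + r • ω) x₀
      rw [add_sub_cancel_left] at this
      linarith
    rw [norm_smul, mem_sphere_zero_iff_norm.1 hω, mul_one, Real.norm_eq_abs] at hr2
    exact ⟨abs_le.1 hr2, show |p.eval r| ≤ ρ by rw [hline]; exact hPxr⟩

/-- van der Corput sublevel-set estimate: For a real polynomial
`Q_λ` of degree at most `d` on `ℝᵐ` with coefficient norm
`⟦λ⟧ = Σ_{1≤|α|≤d}|λ_α| + |Q_λ(0)|` (i.e. the sum of the absolute values of all
its coefficients), the measure of `{x ∈ B₁ : |Q_λ(x)| ≤ ρ}` is at most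
`C(m,d)·ρ^{1/d}·⟦λ⟧^{-1/d}` for every `ρ > 0`. -/
theorem stmt_7 (m d : ℕ) (hm : 1 ≤ m) (hd : 1 ≤ d) :
    ∃ C : ℝ, 0 < C ∧ ∀ P : MvPolynomial (Fin m) ℝ, P.totalDegree ≤ d →
      0 < ∑ α ∈ P.support, |MvPolynomial.coeff α P| →
      ∀ ρ : ℝ, 0 < ρ →
      MeasureTheory.volume
          {x : EuclideanSpace ℝ (Fin m) |
            ‖x‖ ≤ 1 ∧ |MvPolynomial.eval (fun i => x i) P| ≤ ρ}
        ≤ ENNReal.ofReal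
            (C * ρ ^ ((d : ℝ)⁻¹)
              * (∑ α ∈ P.support, |MvPolynomial.coeff α P|) ^ (-(d : ℝ)⁻¹)) := by
  have : Nonempty (Fin m) := ⟨⟨0, hm⟩⟩
  obtain ⟨c, hc, hcP⟩ := exists_mul_sum_abs_coeff_le_abs_eval_unitBall (ι := Fin m) d
  set σ := ((volume : Measure (EuclideanSpace ℝ (Fin m))).toSphere univ).toReal
  set k := Module.finrank ℝ (EuclideanSpace ℝ (Fin m)) - 1
  set K := σ * 2 ^ k * ((d + 1) * ((d + 1) * 2 ^ d / c) ^ (d : ℝ)⁻¹)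
  refine ⟨K + 1, by positivity, fun P hP hN ρ hρ => ?_⟩
  set N := ∑ α ∈ P.support, |MvPolynomial.coeff α P|
  obtain ⟨x₀, hx₀, hPx₀⟩ := hcP P hP
  refine (volume_sublevel_le_of_le_abs_eval hd hP hx₀ (by positivity) hPx₀ ρ).trans ?_
  rw [← ENNReal.ofReal_toReal (measure_ne_top _ univ), ← ENNReal.ofReal_mul (by positivity),
    ← ENNReal.ofReal_mul (by positivity)]
  refine ENNReal.ofReal_le_ofReal ?_
  have hsplit : ((d + 1) * 2 ^ d * ρ / (c * N)) ^ (d : ℝ)⁻¹ =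
      ((d + 1) * 2 ^ d / c) ^ (d : ℝ)⁻¹ * ρ ^ (d : ℝ)⁻¹ * N ^ (-(d : ℝ)⁻¹) := by
    rw [show (d + 1) * 2 ^ d * ρ / (c * N) = (d + 1) * 2 ^ d / c * ρ * N⁻¹ by field_simp,
      Real.mul_rpow (by positivity) (by positivity), Real.mul_rpow (by positivity) hρ.le,
      Real.inv_rpow hN.le, Real.rpow_neg hN.le]
  calc _ = K * (ρ ^ (d : ℝ)⁻¹ * N ^ (-(d : ℝ)⁻¹)) := by rw [hsplit]; ring
    _ ≤ (K + 1) * ρ ^ (d : ℝ)⁻¹ * N ^ (-(d : ℝ)⁻¹) := by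
      rw [mul_assoc (K + 1)]
      exact mul_le_mul_of_nonneg_right (le_add_of_nonneg_right zero_le_one) (by positivity)
end

section
/- Let Q(y) = Σᵢθᵢyᵢ² with θᵢ ∈ {±1}, n ≥ 2, and suppose p_j = C·Q^k with C ≠ 0 and j = 2k ≥ 2 (p_j is Q-type). Then there exists a multi-index γ with |γ| = 2 such that D_{j,γ} ≢ 0. In fact, if l ≠ 1 and γ = (2,0,...,0) ∈ ℤ^{n-1}_{≥0}, the monomial u_l^{2k} occurs in D_{2k,γ}(ũ) with nonzero coefficient. -/
open MvPolynomial

/-- Multi-index partial derivative `∂_α p` of a multivariate polynomial. -/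
noncomputable def mderiv {n : ℕ} (α : Fin n → ℕ) (p : MvPolynomial (Fin n) ℝ) :
    MvPolynomial (Fin n) ℝ :=
  (List.finRange n).foldr (fun i q => (fun r => MvPolynomial.pderiv i r)^[α i] q) p

/-- `α! = ∏ᵢ (αᵢ)!` for a multi-index. -/
def mfact {n : ℕ} (α : Fin n → ℕ) : ℕ := ∏ i, (α i).factorial

/-- `|α| = Σᵢ αᵢ` for a multi-index. -/
def mdeg {n : ℕ} (α : Fin n → ℕ) : ℕ := ∑ i, α i

/-- The monomial `w^α = ∏ᵢ wᵢ^{αᵢ}` as a polynomial. -/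
noncomputable def monX {n : ℕ} (α : Fin n → ℕ) : MvPolynomial (Fin n) ℝ :=
  ∏ i, (X i : MvPolynomial (Fin n) ℝ) ^ α i

/-- The polynomial `B_{j,γ}` attached to `p` and a distinguished coordinate `l`:
`B_{j,γ}(w) = Σ_{α≤γ} (-1)^{|α|}/(α!(γ−α)!) (∂_{(α;|γ−α|)}p)(w)·w^{(γ−α;|α|)}`,
where multi-indices `γ, α` satisfy `γ l = 0` and `(β;k)` inserts `k` in the
`l`-th coordinate (realized here by `Function.update`). -/
noncomputable def Bpoly {n : ℕ} (l : Fin n) (γ : Fin n → ℕ)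
    (p : MvPolynomial (Fin n) ℝ) : MvPolynomial (Fin n) ℝ :=
  ∑ α ∈ Finset.Iic γ,
    (C ((-1 : ℝ) ^ (mdeg α) / ((mfact α : ℝ) * (mfact (γ - α) : ℝ))) :
        MvPolynomial (Fin n) ℝ) *
      mderiv (Function.update α l (mdeg (γ - α))) p *
      monX (Function.update (γ - α) l (mdeg α))

/-- The twisting substitution `u ↦ ũ = (θ₁u₁,…,θₙuₙ)` as polynomials. -/
noncomputable def tw {n : ℕ} (θ : Fin n → ℝ) : Fin n → MvPolynomial (Fin n) ℝ :=
  fun i => C (θ i) * X i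

/-- The twisted monomial `ũ^α = ∏ᵢ (θᵢuᵢ)^{αᵢ}` as a polynomial in `u`. -/
noncomputable def monTw {n : ℕ} (θ : Fin n → ℝ) (α : Fin n → ℕ) :
    MvPolynomial (Fin n) ℝ :=
  ∏ i, (C (θ i) * X i : MvPolynomial (Fin n) ℝ) ^ α i

/-- The polynomial `D_{j,γ}` (viewed as a polynomial in `u`):
`D_{j,γ}(ũ) = Σ_{α≤γ} Σ_{|β|=j−|γ|} (-1)^{|α|}/(α!β!(γ−α)!)
  (∂_{(α;|γ−α|)+β}p_j)(ũ) u^β ũ^{(γ−α;|α|)}`,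
where `(δ;k)` inserts `k` in the `l`-th coordinate. -/
noncomputable def Dpoly {n : ℕ} (θ : Fin n → ℝ) (l : Fin n) (j : ℕ)
    (γ : Fin n → ℕ) (p : MvPolynomial (Fin n) ℝ) : MvPolynomial (Fin n) ℝ :=
  ∑ α ∈ Finset.Iic γ, ∑ β ∈ Finset.Nat.antidiagonalTuple n (j - mdeg γ),
    (C ((-1 : ℝ) ^ (mdeg α) /
        ((mfact α : ℝ) * (mfact β : ℝ) * (mfact (γ - α) : ℝ))) :
        MvPolynomial (Fin n) ℝ) *
      MvPolynomial.aeval (tw θ) (mderiv (Function.update α l (mdeg (γ - α)) + β) p) *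
      monX β * monTw θ (Function.update (γ - α) l (mdeg α))

/-!
Multiplying by the monomial `u^β ũ^{(γ-α;|α|)}` shifts coefficients, so the coefficient of
`u_l^{2k}` in a summand of `D_{2k,γ}` is a coefficient of `(∂^δ p)(ũ)` at the index
`2k e_l - β - (γ-α;|α|)`, and vanishes unless that index is admissible. For `γ = 2 e_m` with
`m ≠ l` this happens only for `α = γ`, `β = (2k-2) e_l`, where the index is `0`; the constant
term of `(∂^δ p)(ũ)` is `δ! [u^δ] p`, and `[u_m² u_l^{2k-2}] Q^k = k θ_m θ_l^{k-1}`. Hence the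
coefficient is `c k θ_m θ_l^{k+1} ≠ 0`.
-/

lemma coeff_iterate_pderiv {σ : Type*} {R : Type*} [CommSemiring R] (i : σ) (t : ℕ)
    (s : σ →₀ ℕ) (p : MvPolynomial σ R) :
    coeff s ((fun r => pderiv i r)^[t] p)
      = coeff (s + Finsupp.single i t) p * ((s i + t).descFactorial t : R) := by
  induction t generalizing p with
  | zero => simp
  | succ t ih =>
    rw [Function.iterate_succ_apply, ih, coeff_pderiv, add_assoc, ← Finsupp.single_add,
      Finsupp.add_apply, Finsupp.single_eq_same, ← add_assoc (s i), Nat.succ_descFactorial_succ]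
    push_cast
    ring

lemma coeff_foldr_iterate_pderiv {σ : Type*} {R : Type*} [CommSemiring R] (δ : σ → ℕ)
    (L : List σ) (hL : L.Nodup) (s : σ →₀ ℕ) (p : MvPolynomial σ R) :
    coeff s (L.foldr (fun i q => (fun r => pderiv i r)^[δ i] q) p)
      = coeff (s + (L.map fun i => Finsupp.single i (δ i)).sum) p
          * (L.map fun i => ((s i + δ i).descFactorial (δ i) : R)).prod := by
  induction L generalizing s with
  | nil => simp
  | cons i L ih =>
    obtain ⟨hi, hL⟩ := List.nodup_cons.mp hL
    have hs : L.map (fun j => (((s + Finsupp.single i (δ i)) j + δ j).descFactorial (δ j) : R))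
        = L.map fun j => ((s j + δ j).descFactorial (δ j) : R) :=
      List.map_congr_left fun j hj => by simp [show i ≠ j from fun h => hi (h ▸ hj)]
    rw [List.foldr_cons, coeff_iterate_pderiv, ih hL, hs]
    simp only [List.map_cons, List.sum_cons, List.prod_cons, add_assoc]
    ring

lemma coeff_mderiv {n : ℕ} (δ : Fin n → ℕ) (s : Fin n →₀ ℕ) (p : MvPolynomial (Fin n) ℝ) :
    coeff s (mderiv δ p)
      = coeff (s + Finsupp.equivFunOnFinite.symm δ) p
          * ∏ i, ((s i + δ i).descFactorial (δ i) : ℝ) := by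
  rw [mderiv, coeff_foldr_iterate_pderiv δ _ (List.nodup_finRange n), Fin.prod_univ_def,
    Finsupp.equivFunOnFinite_symm_eq_sum, Fin.sum_univ_def]

lemma coeff_zero_mderiv {n : ℕ} (δ : Fin n → ℕ) (p : MvPolynomial (Fin n) ℝ) :
    coeff 0 (mderiv δ p) = mfact δ * coeff (Finsupp.equivFunOnFinite.symm δ) p := by
  simp [coeff_mderiv, Nat.descFactorial_self, mfact, mul_comm]

lemma coeff_zero_aeval_tw {n : ℕ} (θ : Fin n → ℝ) (q : MvPolynomial (Fin n) ℝ) :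
    coeff 0 (aeval (tw θ) q) = coeff 0 q := by
  change constantCoeff (aeval (tw θ) q) = constantCoeff q
  induction q using MvPolynomial.induction_on with
  | C a => simp
  | add p q hp hq => rw [map_add, map_add, map_add, hp, hq]
  | mul_X p i hp => simp [tw]

section DiagQuadratic

variable {σ R : Type*} [Fintype σ] [CommSemiring R] (θ : σ → R)

noncomputable def diagQuadratic : MvPolynomial σ R := ∑ i, C (θ i) * X i ^ 2

lemma coeff_mul_diagQuadratic (μ : σ →₀ ℕ) (q : MvPolynomial σ R) :
    coeff μ (q * diagQuadratic θ)
      = ∑ i, if 2 ≤ μ i then coeff (μ - Finsupp.single i 2) q * θ i else 0 := by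
  simp only [diagQuadratic, Finset.mul_sum, coeff_sum, C_mul_X_pow_eq_monomial,
    coeff_mul_monomial', Finsupp.single_le_iff]

lemma coeff_single_diagQuadratic_pow (l : σ) (k : ℕ) :
    coeff (Finsupp.single l (2 * k)) (diagQuadratic θ ^ k) = θ l ^ k := by
  induction k with
  | zero => simp
  | succ k ih =>
    rw [pow_succ, coeff_mul_diagQuadratic, Finset.sum_eq_single l]
    · rw [if_pos (by simp), ← Finsupp.single_tsub, show 2 * (k + 1) - 2 = 2 * k by omega,
        ih, pow_succ]
    · intro i _ hil
      rw [if_neg (by simp [Ne.symm hil])]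
    · simp

lemma coeff_single_add_single_diagQuadratic_pow {m l : σ} (hml : m ≠ l) (k : ℕ) :
    coeff (Finsupp.single m 2 + Finsupp.single l (2 * k)) (diagQuadratic θ ^ (k + 1))
      = (k + 1 : R) * θ m * θ l ^ k := by
  classical
  induction k with
  | zero =>
    rw [pow_one, mul_zero, Finsupp.single_zero, add_zero, diagQuadratic, coeff_sum,
      Finset.sum_eq_single m]
    · simp [X_pow_eq_monomial, coeff_monomial]
    · intro i _ him
      rw [C_mul_X_pow_eq_monomial, coeff_monomial, if_neg]
      simp [Finsupp.single_eq_single_iff, him]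
    · simp
  | succ k ih =>
    set μ := Finsupp.single m 2 + Finsupp.single l (2 * (k + 1))
    have hμm : μ m = 2 := by simp [μ, hml]
    have hμl : μ l = 2 * (k + 1) := by simp [μ, hml]
    have hm : μ - Finsupp.single m 2 = Finsupp.single l (2 * (k + 1)) := by
      simp only [μ, add_tsub_cancel_left]
    have hl : μ - Finsupp.single l 2 = Finsupp.single m 2 + Finsupp.single l (2 * k) := by
      rw [add_tsub_assoc_of_le (by simp), ← Finsupp.single_tsub,
        show 2 * (k + 1) - 2 = 2 * k by omega]
    rw [pow_succ, coeff_mul_diagQuadratic, Finset.sum_eq_add m l hml]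
    · rw [if_pos hμm.ge, if_pos (by omega), hm, hl, coeff_single_diagQuadratic_pow, ih]
      push_cast
      ring
    · intro i _ hi
      rw [if_neg (by simp [μ, Ne.symm hi.1, Ne.symm hi.2])]
    · simp
    · simp

end DiagQuadratic

lemma Finsupp.equivFunOnFinite_symm_add {α M : Type*} [Finite α] [AddZeroClass M] (f g : α → M) :
    equivFunOnFinite.symm (f + g) = equivFunOnFinite.symm f + equivFunOnFinite.symm g := by
  ext
  simp

lemma monX_eq_monomial {n : ℕ} (β : Fin n → ℕ) :
    monX β = monomial (Finsupp.equivFunOnFinite.symm β) (1 : ℝ) := by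
  rw [monomial_eq, Finsupp.prod_fintype _ _ fun _ => pow_zero _, map_one, one_mul, monX]
  simp

lemma monTw_eq_monomial {n : ℕ} (θ : Fin n → ℝ) (δ : Fin n → ℕ) :
    monTw θ δ = monomial (Finsupp.equivFunOnFinite.symm δ) (∏ i, θ i ^ δ i) := by
  rw [← mul_one (∏ i, θ i ^ δ i), ← C_mul_monomial, ← monX_eq_monomial, monTw, monX, map_prod,
    ← Finset.prod_mul_distrib]
  simp only [mul_pow, map_pow]

lemma coeff_C_mul_mul_monX_mul_monTw {n : ℕ} (θ : Fin n → ℝ) (a : ℝ)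
    (q : MvPolynomial (Fin n) ℝ) (β δ : Fin n → ℕ) (μ : Fin n →₀ ℕ) :
    coeff μ (C a * q * monX β * monTw θ δ)
      = if Finsupp.equivFunOnFinite.symm (β + δ) ≤ μ then
          a * (∏ i, θ i ^ δ i) * coeff (μ - Finsupp.equivFunOnFinite.symm (β + δ)) q
        else 0 := by
  rw [mul_assoc, monX_eq_monomial, monTw_eq_monomial, monomial_mul, one_mul,
    coeff_mul_monomial', coeff_C_mul, ← Finsupp.equivFunOnFinite_symm_add]
  split_ifs <;> ring

lemma mfact_single {n : ℕ} (i : Fin n) (a : ℕ) : mfact (Pi.single i a) = a.factorial := by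
  rw [mfact, Finset.prod_eq_single i (fun j _ hj => by simp [hj]) (by simp)]
  simp

lemma mfact_single_add_single {n : ℕ} {i j : Fin n} (hij : i ≠ j) (a b : ℕ) :
    mfact (Pi.single i a + Pi.single j b) = a.factorial * b.factorial := by
  rw [mfact, Finset.prod_eq_mul i j hij (fun t _ ht => by
    rw [Pi.add_apply, Pi.single_eq_of_ne ht.1, Pi.single_eq_of_ne ht.2]; rfl) (by simp) (by simp)]
  simp [hij, Ne.symm hij]

lemma mfact_zero {n : ℕ} : mfact (0 : Fin n → ℕ) = 1 := by
  simp [mfact]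

lemma mdeg_single {n : ℕ} (i : Fin n) (a : ℕ) : mdeg (Pi.single i a) = a := by
  simp [mdeg]

lemma prod_pow_single {n : ℕ} (θ : Fin n → ℝ) (i : Fin n) (a : ℕ) :
    ∏ j, θ j ^ (Pi.single i a : Fin n → ℕ) j = θ i ^ a := by
  rw [Finset.prod_eq_single i (fun j _ hj => by simp [hj]) (by simp), Pi.single_eq_same]

lemma eq_single_of_Dpoly_summand_le {n : ℕ} {l m : Fin n} (hml : m ≠ l) {k : ℕ}
    {α β : Fin n → ℕ} (hα : α ≤ Pi.single m 2) (hβ : ∑ i, β i = 2 * k)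
    (hle : Finsupp.equivFunOnFinite.symm (β + Function.update (Pi.single m 2 - α) l (mdeg α))
      ≤ Finsupp.single l (2 * (k + 1))) :
    α = Pi.single m 2 ∧ β = Pi.single l (2 * k) := by
  have hoff : ∀ i, i ≠ l → β i + (Pi.single m 2 - α : Fin n → ℕ) i = 0 := fun i hi => by
    simpa [Function.update_of_ne hi, Finsupp.single_apply, Ne.symm hi] using hle i
  have hαm : α m = 2 := by
    have h₁ := hoff m hml
    have h₂ := hα m
    simp only [Pi.sub_apply, Pi.single_eq_same] at h₁ h₂
    omega
  have hβl : β l = 2 * k := by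
    rw [← hβ, Finset.sum_eq_single l (fun i _ hi => by have := hoff i hi; omega) (by simp)]
  constructor
  · funext i
    by_cases him : i = m
    · subst him; simpa using hαm
    · have := hα i
      simp only [Pi.single_apply, him, if_false] at this ⊢
      omega
  · funext i
    by_cases hil : i = l
    · subst hil; simpa using hβl
    · have := hoff i hil
      simp only [Pi.single_apply, hil, if_false]
      omega

lemma coeff_single_Dpoly_diagQuadratic_pow {n : ℕ} (θ : Fin n → ℝ) {l m : Fin n} (hml : m ≠ l)
    (k : ℕ) (c : ℝ) :
    coeff (Finsupp.single l (2 * (k + 1)))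
        (Dpoly θ l (2 * (k + 1)) (fun i => if i = m then 2 else 0)
          (C c * diagQuadratic θ ^ (k + 1)))
      = c * (k + 1) * θ m * θ l ^ (k + 2) := by
  have hγ : (fun i => if i = m then 2 else 0) = (Pi.single m 2 : Fin n → ℕ) :=
    funext fun i => (Pi.single_apply m 2 i).symm
  have hdeg : 2 * (k + 1) - mdeg (Pi.single m 2 : Fin n → ℕ) = 2 * k := by
    rw [mdeg_single]; omega
  rw [hγ, Dpoly, hdeg]
  simp only [coeff_sum, coeff_C_mul_mul_monX_mul_monTw]
  rw [← Finset.sum_product', Finset.sum_eq_single (Pi.single m 2, Pi.single l (2 * k))]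
  · simp only [tsub_self]
    have hl : Function.update (0 : Fin n → ℕ) l (mdeg (Pi.single m 2 : Fin n → ℕ))
        = Pi.single l 2 := by
      rw [mdeg_single]; rfl
    have hβδ : Pi.single l (2 * k) + Pi.single l 2 = (Pi.single l (2 * (k + 1)) : Fin n → ℕ) := by
      rw [← Pi.single_add, mul_add_one]
    have hδ : Function.update (Pi.single m 2 : Fin n → ℕ) l (mdeg (0 : Fin n → ℕ))
        = Pi.single m 2 :=
      Function.update_eq_self_iff.mpr (by simp [mdeg, Ne.symm hml])
    rw [hl, hβδ, hδ, Finsupp.equivFunOnFinite_symm_single, if_pos le_rfl, tsub_self,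
      coeff_zero_aeval_tw, coeff_zero_mderiv, Finsupp.equivFunOnFinite_symm_add,
      Finsupp.equivFunOnFinite_symm_single, Finsupp.equivFunOnFinite_symm_single, coeff_C_mul,
      coeff_single_add_single_diagQuadratic_pow θ hml, mdeg_single, mfact_single,
      mfact_single, mfact_single_add_single hml, mfact_zero, prod_pow_single]
    push_cast
    field_simp
    ring
  · rintro ⟨α, β⟩ hαβ hne
    rw [Finset.mem_product, Finset.mem_Iic, Finset.Nat.mem_antidiagonalTuple] at hαβ
    rw [if_neg fun hle => hne (Prod.ext_iff.mpr (eq_single_of_Dpoly_summand_le hml hαβ.1 hαβ.2 hle))]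
  · intro h
    refine absurd ?_ h
    rw [Finset.mem_product, Finset.mem_Iic, Finset.Nat.mem_antidiagonalTuple]
    exact ⟨le_rfl, by simp⟩

/-- If `p_j = c·Q^k` is `Q`-type (`c ≠ 0`, `j = 2k ≥ 2`,
`Q(y) = Σᵢθᵢyᵢ²`), then some `γ` with `|γ| = 2` has `D_{j,γ} ≢ 0`; in fact if
`l ≠ 1` (first coordinate) and `γ = (2,0,…,0)`, the monomial `u_l^{2k}` occurs
in `D_{2k,γ}` with nonzero coefficient. -/
theorem stmt_13 {n : ℕ} (hn : 2 ≤ n) (θ : Fin n → ℝ) (hθ : ∀ i, θ i = 1 ∨ θ i = -1)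
    (l : Fin n) (k : ℕ) (hk : 1 ≤ k) (c : ℝ) (hc : c ≠ 0)
    (p : MvPolynomial (Fin n) ℝ)
    (hp : p = C c * (∑ i, C (θ i) * (X i : MvPolynomial (Fin n) ℝ) ^ 2) ^ k) :
    (∃ γ : Fin n → ℕ, γ l = 0 ∧ mdeg γ = 2 ∧ Dpoly θ l (2 * k) γ p ≠ 0)
    ∧ (l ≠ (⟨0, by omega⟩ : Fin n) →
        MvPolynomial.coeff (Finsupp.single l (2 * k))
          (Dpoly θ l (2 * k)
            (fun i => if i = (⟨0, by omega⟩ : Fin n) then 2 else 0) p) ≠ 0) := by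
  obtain ⟨k, rfl⟩ := Nat.exists_eq_add_of_le' hk
  have hθ0 : ∀ i, θ i ≠ 0 := fun i => by rcases hθ i with h | h <;> simp [h]
  have hcoeff : ∀ m, m ≠ l → coeff (Finsupp.single l (2 * (k + 1)))
      (Dpoly θ l (2 * (k + 1)) (fun i => if i = m then 2 else 0) p) ≠ 0 := by
    intro m hml
    rw [hp, ← diagQuadratic, coeff_single_Dpoly_diagQuadratic_pow θ hml]
    exact mul_ne_zero (mul_ne_zero (mul_ne_zero hc (by positivity)) (hθ0 m)) (pow_ne_zero _ (hθ0 l))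
  refine ⟨?_, fun hl => hcoeff _ (Ne.symm hl)⟩
  have : Nontrivial (Fin n) := Fin.nontrivial_iff_two_le.mpr hn
  obtain ⟨m, hml⟩ := exists_ne l
  exact ⟨fun i => if i = m then 2 else 0, by simp [Ne.symm hml], by simp [mdeg],
    fun h => hcoeff m hml (by rw [h, coeff_zero])⟩
end

section
/- Let p₂(u) = Σ_{|ω|=2} d_ω u^ω be a quadratic form on ℝⁿ, n ≥ 2, with distinguished coordinates l ≠ m(l), and suppose θ_l = θ_{m(l)}. Writing γ^m(1) for the multi-index of order 1 corresponding to coordinate m(l), one has B_{2,γ^m(1)} ≡ 0 if and only if d_{2e_l} = d_{2e_{m(l)}}, d_{e_l+e_i} = 0 for all i ≠ l, and d_{e_{m(l)}+e_i} = 0 for all i ≠ m(l) (i.e. p₂ is Q-type in coordinates l and m(l)). -/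
/-!
For `γ = e_m` the multi-index sum defining `B_{2,γ}` has only the two terms `α = 0` and `α = e_m`,
so `B_{2,γ} p = ∂_l p · X_m - ∂_m p · X_l`. Comparing coefficients of this at `e_l + e_m` and at
`e_i + e_m` (and, by antisymmetry in `l, m`, at `e_i + e_l`) gives the conditions on `p`. Conversely, for a quadratic form these conditions
say `∂_l p = 2 d_{2e_l} X_l` and `∂_m p = 2 d_{2e_m} X_m`, and then the two terms cancel.
-/

open MvPolynomial

lemma Finsupp.exists_eq_single_of_degree_eq_one {σ : Type*} {μ : σ →₀ ℕ} (h : μ.degree = 1) :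
    ∃ j, μ = Finsupp.single j 1 := by
  obtain ⟨j, hj⟩ := Multiset.card_eq_one.mp ((Finsupp.card_toMultiset μ).trans h)
  classical
  exact ⟨j, (Finsupp.toMultiset_eq_iff.mp hj).trans (Multiset.toFinsupp_singleton j)⟩

lemma List.foldr_iterate_ite_eq {ι α : Type*} [DecidableEq ι] (f : ι → α → α) (i : ι) (k : ℕ)
    (a : α) {L : List ι} (hL : L.Nodup) :
    L.foldr (fun j b => (f j)^[if j = i then k else 0] b) a = if i ∈ L then (f i)^[k] a else a := by
  induction L with
  | nil => simp
  | cons j L ih =>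
    obtain ⟨hj, hL⟩ := List.nodup_cons.mp hL
    by_cases hji : j = i
    · subst hji
      simp [ih hL, hj]
    · simp [ih hL, hji, Ne.symm hji]

section Multiindex

variable {n : ℕ}

lemma mderiv_ite (i : Fin n) (k : ℕ) (p : MvPolynomial (Fin n) ℝ) :
    mderiv (fun j => if j = i then k else 0) p = (pderiv i)^[k] p := by
  simp [mderiv, List.foldr_iterate_ite_eq _ i k p (List.nodup_finRange n)]

lemma monX_ite (i : Fin n) (k : ℕ) : monX (fun j => if j = i then k else 0) = X i ^ k := by
  simp [monX, pow_ite, Finset.prod_ite_eq']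

lemma Iic_ite_one (m : Fin n) :
    Finset.Iic (fun j => if j = m then 1 else 0 : Fin n → ℕ)
      = {0, fun j => if j = m then 1 else 0} := by
  ext α
  simp only [Finset.mem_Iic, Finset.mem_insert, Finset.mem_singleton, Pi.le_def, funext_iff,
    Pi.zero_apply]
  constructor
  · intro h
    by_cases hm : α m = 0
    · refine Or.inl fun j => ?_
      have := h j
      split_ifs at this with hj <;> [exact hj ▸ hm; omega]
    · refine Or.inr fun j => ?_
      have := h j
      split_ifs at this ⊢ with hj <;> [(subst hj; omega); omega]
  · rintro (h | h) j <;> simp [h]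

lemma Bpoly_ite_one {l m : Fin n} (hlm : m ≠ l) (p : MvPolynomial (Fin n) ℝ) :
    Bpoly l (fun j => if j = m then 1 else 0) p = pderiv l p * X m - pderiv m p * X l := by
  have hγ : (fun j => if j = m then 1 else 0 : Fin n → ℕ) ≠ 0 := fun h => by
    simpa using congrFun h m
  have hupdate_zero : Function.update (0 : Fin n → ℕ) l 1 = fun j => if j = l then 1 else 0 := by
    ext j; simp [Function.update_apply]
  have hupdate_γ : Function.update (fun j => if j = m then 1 else 0 : Fin n → ℕ) l 0
      = fun j => if j = m then 1 else 0 := by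
    ext j; by_cases hj : j = l <;> simp [hj, hlm.symm]
  have hdeg_γ : mdeg (fun j => if j = m then 1 else 0 : Fin n → ℕ) = 1 := by simp [mdeg]
  have hfact_γ : mfact (fun j => if j = m then 1 else 0 : Fin n → ℕ) = 1 := by
    simp [mfact, apply_ite Nat.factorial]
  have hdeg_zero : mdeg (0 : Fin n → ℕ) = 0 := by simp [mdeg]
  have hfact_zero : mfact (0 : Fin n → ℕ) = 1 := by simp [mfact]
  rw [Bpoly, Iic_ite_one, Finset.sum_pair hγ.symm, tsub_zero, tsub_self]
  rw [hdeg_γ, hfact_γ, hdeg_zero, hfact_zero, hupdate_zero, hupdate_γ, mderiv_ite, mderiv_ite,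
    monX_ite, monX_ite]
  simp only [Nat.cast_one, pow_zero, pow_one, mul_one, div_one, map_one, map_neg,
    Function.iterate_one]
  ring

end Multiindex

section RotationDerivative

variable {σ R : Type*} [CommRing R] {p : MvPolynomial σ R} {l m : σ}

lemma coeff_single_add_eq_zero_of_pderiv_mul_X_eq (hlm : m ≠ l)
    (h : pderiv l p * X m = pderiv m p * X l) {i : σ} (hi : i ≠ l) :
    coeff (Finsupp.single l 1 + Finsupp.single i 1) p = 0 := by
  classical
  have hcoeff := congrArg (coeff (Finsupp.single i 1 + Finsupp.single m 1)) h
  rw [coeff_mul_X, coeff_pderiv, coeff_mul_X'] at hcoeff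
  simpa [Finsupp.single_apply, hi, hlm, add_comm] using hcoeff

lemma coeff_single_two_eq_of_pderiv_mul_X_eq [IsDomain R] [CharZero R]
    (h : pderiv l p * X m = pderiv m p * X l) :
    coeff (Finsupp.single l 2) p = coeff (Finsupp.single m 2) p := by
  have hcoeff := congrArg (coeff (Finsupp.single l 1 + Finsupp.single m 1)) h
  rw [coeff_mul_X, add_comm, coeff_mul_X, coeff_pderiv, coeff_pderiv, ← Finsupp.single_add,
    ← Finsupp.single_add, Finsupp.single_eq_same, Finsupp.single_eq_same] at hcoeff
  exact mul_right_cancel₀ two_ne_zero (by simpa [one_add_one_eq_two] using hcoeff)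

lemma pderiv_eq_C_mul_X_of_isHomogeneous_two (hp : p.IsHomogeneous 2)
    (h : ∀ i, i ≠ l → coeff (Finsupp.single l 1 + Finsupp.single i 1) p = 0) :
    pderiv l p = C (2 * coeff (Finsupp.single l 2) p) * X l := by
  classical
  ext μ
  rw [coeff_pderiv, coeff_C_mul, coeff_X]
  by_cases hμ : Finsupp.single l 1 = μ
  · subst hμ
    rw [if_pos rfl, ← Finsupp.single_add, Finsupp.single_eq_same]
    push_cast
    ring
  rw [if_neg hμ, mul_zero]
  by_cases hdeg : μ.degree = 1
  · obtain ⟨j, rfl⟩ := Finsupp.exists_eq_single_of_degree_eq_one hdeg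
    have hj : j ≠ l := fun hjl => hμ (hjl ▸ rfl)
    rw [add_comm, h j hj, zero_mul]
  · have : (μ + Finsupp.single l 1).degree ≠ 2 := by
      rw [map_add, Finsupp.degree_single]
      omega
    rw [hp.coeff_eq_zero this, zero_mul]

theorem pderiv_mul_X_eq_iff_of_isHomogeneous_two [IsDomain R] [CharZero R] (hlm : m ≠ l)
    (hp : p.IsHomogeneous 2) :
    pderiv l p * X m = pderiv m p * X l ↔
      coeff (Finsupp.single l 2) p = coeff (Finsupp.single m 2) p
        ∧ (∀ i, i ≠ l → coeff (Finsupp.single l 1 + Finsupp.single i 1) p = 0)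
        ∧ (∀ i, i ≠ m → coeff (Finsupp.single m 1 + Finsupp.single i 1) p = 0) := by
  constructor
  · intro h
    exact ⟨coeff_single_two_eq_of_pderiv_mul_X_eq h,
      fun i => coeff_single_add_eq_zero_of_pderiv_mul_X_eq hlm h,
      fun i => coeff_single_add_eq_zero_of_pderiv_mul_X_eq hlm.symm h.symm⟩
  · rintro ⟨hsq, hl, hm⟩
    rw [pderiv_eq_C_mul_X_of_isHomogeneous_two hp hl, pderiv_eq_C_mul_X_of_isHomogeneous_two hp hm,
      hsq]
    ring

end RotationDerivative

theorem stmt_14_general {n : ℕ}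
    (l m : Fin n) (hlm : m ≠ l)
    (p : MvPolynomial (Fin n) ℝ) (hp : p.IsHomogeneous 2) :
    Bpoly l (fun i => if i = m then 1 else 0) p = 0 ↔
      (MvPolynomial.coeff (Finsupp.single l 2) p
          = MvPolynomial.coeff (Finsupp.single m 2) p
        ∧ (∀ i, i ≠ l →
            MvPolynomial.coeff (Finsupp.single l 1 + Finsupp.single i 1) p = 0)
        ∧ (∀ i, i ≠ m →
            MvPolynomial.coeff (Finsupp.single m 1 + Finsupp.single i 1) p = 0)) := by
  rw [Bpoly_ite_one hlm, sub_eq_zero]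
  exact pderiv_mul_X_eq_iff_of_isHomogeneous_two hlm hp

/-- Let `p₂(u) = Σ_{|ω|=2} d_ω u^ω` be a quadratic form on `ℝⁿ`,
with distinguished coordinates `l ≠ m` and `θ_l = θ_m`. Writing `γ^m(1)` for
the order-1 multi-index at coordinate `m`, one has `B_{2,γ^m(1)} ≡ 0` iff
`d_{2e_l} = d_{2e_m}`, `d_{e_l+e_i} = 0` for all `i ≠ l`, and
`d_{e_m+e_i} = 0` for all `i ≠ m` (i.e. `p₂` is `Q`-type in coordinates `l`
and `m`). -/
theorem stmt_14 {n : ℕ} (hn : 2 ≤ n) (θ : Fin n → ℝ) (hθ : ∀ i, θ i = 1 ∨ θ i = -1)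
    (l m : Fin n) (hlm : m ≠ l) (hθlm : θ l = θ m)
    (p : MvPolynomial (Fin n) ℝ) (hp : p.IsHomogeneous 2) :
    Bpoly l (fun i => if i = m then 1 else 0) p = 0 ↔
      (MvPolynomial.coeff (Finsupp.single l 2) p
          = MvPolynomial.coeff (Finsupp.single m 2) p
        ∧ (∀ i, i ≠ l →
            MvPolynomial.coeff (Finsupp.single l 1 + Finsupp.single i 1) p = 0)
        ∧ (∀ i, i ≠ m →
            MvPolynomial.coeff (Finsupp.single m 1 + Finsupp.single i 1) p = 0)) :=
  stmt_14_general l m hlm p hp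
end

section
/- Let j be even with p_j Q-type (p_j = C·Q^{j/2}, C ≠ 0, Q(y)=Σθᵢyᵢ²). Then for any order-1 multi-index γ^m(1), |u|²Ξ_{j,γ^m(1)}(ũ) = −θ_lθ_{m(l)}·B_{j,γ^m(1)}(ũ), where Ξ and B are as defined via the Taylor expansion coefficients. -/
open MvPolynomial

/-!
By Taylor's formula, `Σ_{|β|=N} (1/β!) (∂^β g)(s) X^β` is the degree-`N` homogeneous part of
`u ↦ g(s + u)`, evaluated at `u = X`. For `∂_j p = 2kcθ_j X_j Q^{k-1}` and `N = 2k - 2`, the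
degree-`N` part of `(s_j + u_j) Q(s + u)^{k-1}` is
`s_j Q(u)^{k-1} + (k-1) u_j ⟨2θs, u⟩ Q(u)^{k-2}`. Multiplied by `θ_m X_m` resp. `θ_l X_l`,
the second summands cancel in `Ξ`, and since `Q(ũ) = Q` what remains is exactly `B`. Finally `B`
is a multiple of `θ_l - θ_m`, which vanishes unless `θ_l θ_m = -1`, so `B = -θ_l θ_m B`.
-/

namespace MvPolynomial

theorem pderiv_comm {σ R : Type*} [CommSemiring R] (i j : σ) (p : MvPolynomial σ R) :
    pderiv i (pderiv j p) = pderiv j (pderiv i p) := by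
  classical
  induction p using MvPolynomial.induction_on with
  | C a => simp
  | add p q hp hq => simp only [map_add, hp, hq]
  | mul_X p k hp =>
    have hX : ∀ a b, pderiv a (pderiv b (X k : MvPolynomial σ R)) = 0 := fun a b => by
      rw [pderiv_X, Pi.single_apply]; split_ifs <;> simp
    simp only [pderiv_mul, map_add, hp, hX]
    ring

section Homogeneous
variable {σ R : Type*} [CommSemiring R]

section GradedAlgebra
attribute [local instance] MvPolynomial.gradedAlgebra

theorem homogeneousComponent_mul_of_isHomogeneous_left {a : MvPolynomial σ R} {i j N : ℕ}
    (ha : a.IsHomogeneous i) (h : i + j = N) (b : MvPolynomial σ R) :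
    homogeneousComponent N (a * b) = a * homogeneousComponent j b := by
  subst h
  rw [← decomposition.decompose'_apply, ← decomposition.decompose'_apply]
  exact DirectSum.coe_decompose_mul_add_of_left_mem (homogeneousSubmodule σ R) ha

end GradedAlgebra

variable {c L P : MvPolynomial σ R}

theorem totalDegree_add_add_le (hc : c.IsHomogeneous 0) (hL : L.IsHomogeneous 1)
    (hP : P.IsHomogeneous 2) : (c + L + P).totalDegree ≤ 2 :=
  (totalDegree_add _ _).trans <| max_le ((totalDegree_add _ _).trans <|
    max_le (hc.totalDegree_le.trans (by norm_num)) (hL.totalDegree_le.trans (by norm_num)))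
    hP.totalDegree_le

theorem homogeneousComponent_pow_add_add (hc : c.IsHomogeneous 0) (hL : L.IsHomogeneous 1)
    (hP : P.IsHomogeneous 2) (r : ℕ) :
    homogeneousComponent (2 * r) ((c + L + P) ^ r) = P ^ r ∧
      homogeneousComponent (2 * r + 1) ((c + L + P) ^ (r + 1)) = (r + 1) * L * P ^ r := by
  have vanish : ∀ e N, 2 * e < N → homogeneousComponent N ((c + L + P) ^ e) = 0 :=
    fun e N h => homogeneousComponent_eq_zero _ _ <| ((totalDegree_pow _ e).trans
      (Nat.mul_le_mul_left e (totalDegree_add_add_le hc hL hP))).trans_lt (by linarith)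
  have expand : ∀ e j, homogeneousComponent (j + 2) ((c + L + P) ^ (e + 1)) =
      c * homogeneousComponent (j + 2) ((c + L + P) ^ e) +
        L * homogeneousComponent (j + 1) ((c + L + P) ^ e) +
        P * homogeneousComponent j ((c + L + P) ^ e) := fun e j => by
    rw [pow_succ', add_mul, add_mul, map_add, map_add,
      homogeneousComponent_mul_of_isHomogeneous_left hc (zero_add _),
      homogeneousComponent_mul_of_isHomogeneous_left hL (add_comm _ _),
      homogeneousComponent_mul_of_isHomogeneous_left hP (add_comm _ _)]
  induction r with
  | zero =>
    refine ⟨by simp, ?_⟩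
    rw [pow_one, map_add, map_add, homogeneousComponent_of_mem hc,
      homogeneousComponent_eq_self hL, homogeneousComponent_of_mem hP]
    simp
  | succ r ih =>
    have top : homogeneousComponent (2 * (r + 1)) ((c + L + P) ^ (r + 1)) = P ^ (r + 1) := by
      rw [show 2 * (r + 1) = 2 * r + 2 by ring, expand, ih.1, vanish r _ (by omega),
        vanish r _ (by omega)]
      ring
    refine ⟨top, ?_⟩
    rw [show 2 * (r + 1) + 1 = (2 * r + 1) + 2 by ring, expand, ih.2,
      show 2 * r + 1 + 1 = 2 * (r + 1) by ring, top, vanish (r + 1) _ (by omega)]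
    push_cast
    ring

theorem homogeneousComponent_mul_pow_add_add {s x : MvPolynomial σ R} (hs : s.IsHomogeneous 0)
    (hx : x.IsHomogeneous 1) (hc : c.IsHomogeneous 0) (hL : L.IsHomogeneous 1)
    (hP : P.IsHomogeneous 2) (r : ℕ) :
    homogeneousComponent (2 * r) ((s + x) * (c + L + P) ^ r) =
      s * P ^ r + r * x * L * P ^ (r - 1) := by
  cases r with
  | zero =>
    rw [pow_zero, mul_one, map_add, homogeneousComponent_eq_self hs,
      homogeneousComponent_of_mem hx]
    simp
  | succ r =>
    rw [add_mul, map_add, homogeneousComponent_mul_of_isHomogeneous_left hs (zero_add _),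
      homogeneousComponent_mul_of_isHomogeneous_left hx (by ring : 1 + (2 * r + 1) = 2 * (r + 1)),
      (homogeneousComponent_pow_add_add hc hL hP _).1,
      (homogeneousComponent_pow_add_add hc hL hP _).2, Nat.add_sub_cancel]
    push_cast
    ring

theorem eval_homogeneousComponent_eq_sum {n : ℕ} (x : Fin n → R) (N : ℕ)
    (P : MvPolynomial (Fin n) R) :
    eval x (homogeneousComponent N P) =
      ∑ β ∈ Finset.Nat.antidiagonalTuple n N,
        coeff (Finsupp.equivFunOnFinite.symm β) P * ∏ i, x i ^ β i := by
  set e := (Finsupp.equivFunOnFinite (α := Fin n) (M := ℕ)).symm.toEmbedding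
  have mem_iff : ∀ d, d ∈ (Finset.Nat.antidiagonalTuple n N).map e ↔ d.degree = N :=
    fun d => by
    simp [e, Finset.Nat.mem_antidiagonalTuple, Finsupp.degree_eq_sum]
  rw [eval_eq']
  refine ((Finset.sum_subset ?_ ?_).trans (Finset.sum_congr rfl fun d hd => ?_)).trans
    (Finset.sum_map _ e fun d => coeff d P * ∏ i, x i ^ d i)
  · intro d hd
    rw [support_homogeneousComponent, Finset.mem_filter] at hd
    exact (mem_iff d).2 hd.2
  · intro d _ hd
    rw [notMem_support_iff.1 hd, zero_mul]
  · rw [coeff_homogeneousComponent, if_pos ((mem_iff d).1 hd)]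

end Homogeneous

section Translate
variable {σ S R : Type*} [CommSemiring S] [CommSemiring R] [Algebra S R]

noncomputable def translate (s : σ → R) : MvPolynomial σ S →ₐ[S] MvPolynomial σ R :=
  aeval fun i => C (s i) + X i

theorem translate_X (s : σ → R) (i : σ) : translate (S := S) s (X i) = C (s i) + X i :=
  aeval_X _ _

theorem translate_C (s : σ → R) (a : S) : translate s (C a) = C (algebraMap S R a) :=
  (aeval_C _ a).trans (algebraMap_apply a)

theorem pderiv_translate (s : σ → R) (j : σ) (g : MvPolynomial σ S) :
    pderiv j (translate s g) = translate s (pderiv j g) := by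
  classical
  induction g using MvPolynomial.induction_on with
  | C a => simp
  | add p q hp hq => simp only [map_add, hp, hq]
  | mul_X p i hp =>
    simp only [map_mul, pderiv_mul, hp, translate_X, map_add, pderiv_C, zero_add, pderiv_X,
      Pi.single_apply]
    split_ifs <;> simp

theorem constantCoeff_translate (s : σ → R) (g : MvPolynomial σ S) :
    constantCoeff (translate s g) = aeval s g := by
  induction g using MvPolynomial.induction_on with
  | C a => simp
  | add p q hp hq => simp only [map_add, hp, hq]
  | mul_X p i hp => simp [hp, translate_X]

end Translate

end MvPolynomial

section MultiIndex
variable {σ R : Type*} [CommSemiring R]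

theorem foldr_iterate_pderiv_comm (β : σ → ℕ) (j : σ) (L : List σ) (k : ℕ)
    (q : MvPolynomial σ R) :
    L.foldr (fun i q => (pderiv i)^[β i] q) ((pderiv j)^[k] q) =
      (pderiv j)^[k] (L.foldr (fun i q => (pderiv i)^[β i] q) q) := by
  induction L with
  | nil => rfl
  | cons a L ih =>
    rw [List.foldr_cons, List.foldr_cons, ih,
      ((Function.Commute.iterate_iterate (fun p => pderiv_comm j a p)) k (β a)).eq]

theorem foldr_iterate_pderiv_add_single [DecidableEq σ] (β : σ → ℕ) (j : σ) (L : List σ)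
    (q : MvPolynomial σ R) :
    L.foldr (fun i q => (pderiv i)^[β i + if i = j then 1 else 0] q) q =
      (pderiv j)^[L.count j] (L.foldr (fun i q => (pderiv i)^[β i] q) q) := by
  induction L with
  | nil => rfl
  | cons a L ih =>
    rw [List.foldr_cons, List.foldr_cons, ih, List.count_cons]
    by_cases h : a = j
    · subst h
      simp only [beq_self_eq_true, if_true, ← Function.iterate_add_apply]
      congr 1
      omega
    · rw [if_neg h, add_zero, beq_false_of_ne h, if_neg Bool.false_ne_true, add_zero]
      exact ((Function.Commute.iterate_iterate
        (fun p : MvPolynomial σ R => pderiv_comm a j p)) _ _).eq _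

variable {n : ℕ}

theorem mderiv_zero (q : MvPolynomial (Fin n) ℝ) : mderiv 0 q = q := by
  simp [mderiv]

theorem mderiv_pderiv_comm (β : Fin n → ℕ) (j : Fin n) (q : MvPolynomial (Fin n) ℝ) :
    mderiv β (pderiv j q) = pderiv j (mderiv β q) :=
  foldr_iterate_pderiv_comm β j _ 1 q

theorem mderiv_add_single (β : Fin n → ℕ) (j : Fin n) (q : MvPolynomial (Fin n) ℝ) :
    mderiv (fun i => β i + if i = j then 1 else 0) q = mderiv β (pderiv j q) := by
  rw [mderiv_pderiv_comm, mderiv, foldr_iterate_pderiv_add_single,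
    List.count_eq_one_of_mem (List.nodup_finRange n) (List.mem_finRange j)]
  rfl

theorem mfact_add_single (β : Fin n → ℕ) (j : Fin n) :
    mfact (fun i => β i + if i = j then 1 else 0) = mfact β * (β j + 1) := by
  have h : ∀ i, (β i + if i = j then 1 else 0).factorial =
      (β i).factorial * if i = j then β j + 1 else 1 := fun i => by
    split_ifs with h
    · subst h; rw [Nat.factorial_succ, mul_comm]
    · simp
  simp only [mfact, h, Finset.prod_mul_distrib, Finset.prod_ite_eq', Finset.mem_univ, if_true]

theorem mfact_ne_zero (β : Fin n → ℕ) : mfact β ≠ 0 :=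
  Finset.prod_ne_zero_iff.2 fun i _ => (β i).factorial_ne_zero

theorem mdeg_add_single (β : Fin n → ℕ) (j : Fin n) :
    mdeg (fun i => β i + if i = j then 1 else 0) = mdeg β + 1 := by
  simp [mdeg, Finset.sum_add_distrib]

theorem monX_add_single (β : Fin n → ℕ) (j : Fin n) :
    monX (fun i => β i + if i = j then 1 else 0) = monX β * X j := by
  simp only [monX, pow_add, Finset.prod_mul_distrib, pow_ite, pow_one, pow_zero,
    Finset.prod_ite_eq', Finset.mem_univ, if_true]

theorem exists_eq_add_single_of_mdeg_eq_succ {β : Fin n → ℕ} {N : ℕ} (h : mdeg β = N + 1) :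
    ∃ (β' : Fin n → ℕ) (j : Fin n),
      mdeg β' = N ∧ β = fun i => β' i + if i = j then 1 else 0 := by
  obtain ⟨j, hj⟩ : ∃ j, β j ≠ 0 := by
    by_contra! h0
    simp [mdeg, h0] at h
  have hβ : β = fun i => Function.update β j (β j - 1) i + if i = j then 1 else 0 := by
    funext i
    rcases eq_or_ne i j with rfl | hij
    · simp only [Function.update_self, if_true]; omega
    · simp [hij]
  refine ⟨_, j, ?_, hβ⟩
  have := mdeg_add_single (Function.update β j (β j - 1)) j
  rw [← hβ, h] at this
  omega

end MultiIndex

section Taylor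
variable {n : ℕ}

theorem mfact_smul_coeff_translate {R : Type*} [CommSemiring R] [Algebra ℝ R] (s : Fin n → R)
    (β : Fin n → ℕ) (g : MvPolynomial (Fin n) ℝ) :
    mfact β • coeff (Finsupp.equivFunOnFinite.symm β) (translate s g) =
      aeval s (mderiv β g) := by
  obtain ⟨N, hN⟩ : ∃ N, mdeg β = N := ⟨_, rfl⟩
  induction N generalizing β g with
  | zero =>
    obtain rfl : β = 0 := funext fun i => Finset.sum_eq_zero_iff.1 hN i (Finset.mem_univ i)
    have h0 : Finsupp.equivFunOnFinite.symm (0 : Fin n → ℕ) = 0 := by ext; simp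
    simp [mfact, mderiv_zero, h0, ← constantCoeff_translate, constantCoeff_eq]
  | succ N ih =>
    obtain ⟨β, j, hβ, rfl⟩ := exists_eq_add_single_of_mdeg_eq_succ hN
    have hsupp : Finsupp.equivFunOnFinite.symm (fun i => β i + if i = j then 1 else 0) =
        Finsupp.equivFunOnFinite.symm β + Finsupp.single j 1 := by
      ext i
      simp [Finsupp.single_apply, eq_comm]
    rw [mfact_add_single, hsupp, mderiv_add_single, ← ih β (pderiv j g) hβ,
      ← pderiv_translate, coeff_pderiv, mul_smul]
    simp only [Finsupp.coe_equivFunOnFinite_symm, nsmul_eq_mul, Nat.cast_add, Nat.cast_one]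
    ring

noncomputable def taylorSum (s : Fin n → MvPolynomial (Fin n) ℝ) (N : ℕ)
    (g : MvPolynomial (Fin n) ℝ) : MvPolynomial (Fin n) ℝ :=
  ∑ β ∈ Finset.Nat.antidiagonalTuple n N,
    C ((mfact β : ℝ))⁻¹ * aeval s (mderiv β g) * monX β

theorem taylorSum_eq_eval_homogeneousComponent (s : Fin n → MvPolynomial (Fin n) ℝ) (N : ℕ)
    (g : MvPolynomial (Fin n) ℝ) :
    taylorSum s N g = eval X (homogeneousComponent N (translate s g)) := by
  rw [taylorSum, eval_homogeneousComponent_eq_sum]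
  refine Finset.sum_congr rfl fun β _ => ?_
  rw [← mfact_smul_coeff_translate, nsmul_eq_mul, ← mul_assoc, ← map_natCast C, ← C_mul,
    inv_mul_cancel₀ (Nat.cast_ne_zero.2 (mfact_ne_zero β)), C_1, one_mul]
  rfl

end Taylor

section QuadForm
variable {σ : Type*} [Fintype σ] (θ : σ → ℝ)

noncomputable def quadForm : MvPolynomial σ ℝ := ∑ i, C (θ i) * X i ^ 2

theorem pderiv_quadForm [DecidableEq σ] (j : σ) :
    pderiv j (quadForm θ) = C (2 * θ j) * X j := by
  simp [quadForm, pderiv_X, Pi.single_apply, map_ofNat]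
  ring

theorem pderiv_C_mul_quadForm_pow (c : ℝ) (k : ℕ) (j : σ) :
    pderiv j (C c * quadForm θ ^ k) = C (2 * k * c * θ j) * (X j * quadForm θ ^ (k - 1)) := by
  classical
  rw [pderiv_C_mul, pderiv_pow, pderiv_quadForm]
  simp only [C_mul, map_natCast, map_ofNat]
  ring

theorem translate_quadForm {R : Type*} [CommSemiring R] [Algebra ℝ R] (s : σ → R) :
    translate s (quadForm θ) = C (aeval s (quadForm θ)) +
      ∑ i, C (algebraMap ℝ R (2 * θ i) * s i) * X i +
      ∑ i, C (algebraMap ℝ R (θ i)) * X i ^ 2 := by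
  simp only [quadForm, map_sum, ← Finset.sum_add_distrib]
  refine Finset.sum_congr rfl fun i _ => ?_
  simp only [map_mul, map_pow, translate_X, translate_C, aeval_C, aeval_X, map_ofNat]
  ring

theorem eval_homogeneousComponent_translate_X_mul_quadForm_pow (s : σ → MvPolynomial σ ℝ)
    (j : σ) (r : ℕ) :
    eval X (homogeneousComponent (2 * r) (translate s (X j * quadForm θ ^ r))) =
      s j * quadForm θ ^ r +
        (r : MvPolynomial σ ℝ) * X j * (∑ i, C (2 * θ i) * s i * X i) *
          quadForm θ ^ (r - 1) := by
  have hL :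
      (∑ i, C (algebraMap ℝ (MvPolynomial σ ℝ) (2 * θ i) * s i) * X i).IsHomogeneous 1 :=
    IsHomogeneous.sum _ _ _ fun i _ => (isHomogeneous_X _ i).C_mul _
  have hP : (∑ i, C (algebraMap ℝ (MvPolynomial σ ℝ) (θ i)) * X i ^ 2).IsHomogeneous 2 :=
    IsHomogeneous.sum _ _ _ fun i _ => (isHomogeneous_X_pow i 2).C_mul _
  rw [map_mul, map_pow, translate_X, translate_quadForm, homogeneousComponent_mul_pow_add_add
    (isHomogeneous_C _ _) (isHomogeneous_X _ _) (isHomogeneous_C _ _) hL hP]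
  simp only [map_add, map_mul, map_pow, map_sum, map_natCast, eval_C, eval_X, algebraMap_eq]
  rfl

theorem aeval_C_mul_X_quadForm (hθ : ∀ i, θ i ^ 2 = 1) :
    aeval (fun i => C (θ i) * X i) (quadForm θ) = quadForm θ := by
  simp only [quadForm, map_sum, map_mul, map_pow, aeval_C, aeval_X, algebraMap_eq]
  refine Finset.sum_congr rfl fun i _ => ?_
  have h : (C (θ i) : MvPolynomial σ ℝ) ^ 2 = 1 := by rw [← map_pow, hθ i, map_one]
  linear_combination C (θ i) * X i ^ 2 * h

end QuadForm

theorem taylorSum_pderiv_C_mul_quadForm_pow {n : ℕ} (θ : Fin n → ℝ)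
    (s : Fin n → MvPolynomial (Fin n) ℝ) (c : ℝ) (k : ℕ) (j : Fin n) :
    taylorSum s (2 * k - 2) (pderiv j (C c * quadForm θ ^ k)) =
      C (2 * k * c * θ j) * (s j * quadForm θ ^ (k - 1) +
        ((k - 1 : ℕ) : MvPolynomial (Fin n) ℝ) * X j * (∑ i, C (2 * θ i) * s i * X i) *
          quadForm θ ^ (k - 1 - 1)) := by
  rw [taylorSum_eq_eval_homogeneousComponent, pderiv_C_mul_quadForm_pow, map_mul, translate_C,
    homogeneousComponent_C_mul, map_mul, eval_C, algebraMap_eq, ← Nat.mul_sub_one,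
    eval_homogeneousComponent_translate_X_mul_quadForm_pow]

theorem stmt_17_general {n : ℕ} (θ : Fin n → ℝ) (hθ : ∀ i, θ i = 1 ∨ θ i = -1)
    (l m : Fin n) (k : ℕ) (c : ℝ)
    (p : MvPolynomial (Fin n) ℝ)
    (hp : p = C c * (∑ i, C (θ i) * (X i : MvPolynomial (Fin n) ℝ) ^ 2) ^ k)
    (Xi Bt : MvPolynomial (Fin n) ℝ)
    (hXi : Xi = ∑ β ∈ Finset.Nat.antidiagonalTuple n (2 * k - 2),
      (C ((mfact β : ℝ))⁻¹ : MvPolynomial (Fin n) ℝ) *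
        (C (θ m) * MvPolynomial.aeval (fun i => (C (θ i) * X i : MvPolynomial (Fin n) ℝ))
              (mderiv (fun i => β i + if i = l then 1 else 0) p) *
            monX (fun i => β i + if i = m then 1 else 0)
         - C (θ l) * MvPolynomial.aeval (fun i => (C (θ i) * X i : MvPolynomial (Fin n) ℝ))
              (mderiv (fun i => β i + if i = m then 1 else 0) p) *
            monX (fun i => β i + if i = l then 1 else 0)))
    (hBt : Bt =
        MvPolynomial.aeval (fun i => (C (θ i) * X i : MvPolynomial (Fin n) ℝ))
            (MvPolynomial.pderiv l p) * (C (θ m) * X m)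
        - MvPolynomial.aeval (fun i => (C (θ i) * X i : MvPolynomial (Fin n) ℝ))
            (MvPolynomial.pderiv m p) * (C (θ l) * X l)) :
    Xi = C (-(θ l * θ m)) * Bt := by
  change p = C c * quadForm θ ^ k at hp
  subst hp
  set u : Fin n → MvPolynomial (Fin n) ℝ := fun i => C (θ i) * X i
  have taylor : Xi = C (θ m) * X m * taylorSum u (2 * k - 2) (pderiv l (C c * quadForm θ ^ k)) -
      C (θ l) * X l * taylorSum u (2 * k - 2) (pderiv m (C c * quadForm θ ^ k)) := by
    simp only [hXi, taylorSum, mderiv_add_single, monX_add_single, Finset.mul_sum,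
      ← Finset.sum_sub_distrib]
    exact Finset.sum_congr rfl fun β _ => by ring
  have hθ2 : ∀ i, θ i ^ 2 = 1 := fun i => by rcases hθ i with h | h <;> simp [h]
  have hCθ : ∀ i, (C (θ i) : MvPolynomial (Fin n) ℝ) ^ 2 = 1 := fun i => by
    rw [← map_pow, hθ2, map_one]
  rw [taylor, taylorSum_pderiv_C_mul_quadForm_pow, taylorSum_pderiv_C_mul_quadForm_pow, hBt,
    pderiv_C_mul_quadForm_pow, pderiv_C_mul_quadForm_pow]
  simp only [u, map_mul, map_pow, aeval_C, aeval_X, algebraMap_eq, aeval_C_mul_X_quadForm θ hθ2,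
    map_neg]
  linear_combination (C 2 * C (k : ℝ) * C c * X l * X m * quadForm θ ^ (k - 1)) *
    (C (θ l) * C (θ m) ^ 2 * hCθ l - C (θ l) ^ 2 * C (θ m) * hCθ m)

/-- If `j = 2k` is even and `p_j = c·Q^k` is `Q`-type (`c ≠ 0`,
`Q(u) = Σᵢθᵢuᵢ²`), then for any order-1 multi-index `γ^m(1)` (coordinate
`m ≠ l`), `|u|²Ξ_{j,γ^m(1)}(ũ) = −θ_lθ_m·B_{j,γ^m(1)}(ũ)`, where
`|u|²Ξ_{j,γ^m(1)}(ũ) = Σ_{|β|=j−2}(1/β!)[θ_m(∂_{β+e_l}p_j)(ũ)u^{β+e_m} −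
θ_l(∂_{β+e_m}p_j)(ũ)u^{β+e_l}]` and
`B_{j,γ^m(1)}(ũ) = (∂_{e_l}p_j)(ũ)ũ^{e_m} − (∂_{e_m}p_j)(ũ)ũ^{e_l}`. -/
theorem stmt_17 {n : ℕ} (hn : 2 ≤ n) (θ : Fin n → ℝ) (hθ : ∀ i, θ i = 1 ∨ θ i = -1)
    (l m : Fin n) (hlm : m ≠ l) (k : ℕ) (hk : 1 ≤ k) (c : ℝ) (hc : c ≠ 0)
    (p : MvPolynomial (Fin n) ℝ)
    (hp : p = C c * (∑ i, C (θ i) * (X i : MvPolynomial (Fin n) ℝ) ^ 2) ^ k)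
    (Xi Bt : MvPolynomial (Fin n) ℝ)
    (hXi : Xi = ∑ β ∈ Finset.Nat.antidiagonalTuple n (2 * k - 2),
      (C ((mfact β : ℝ))⁻¹ : MvPolynomial (Fin n) ℝ) *
        (C (θ m) * MvPolynomial.aeval (fun i => (C (θ i) * X i : MvPolynomial (Fin n) ℝ))
              (mderiv (fun i => β i + if i = l then 1 else 0) p) *
            monX (fun i => β i + if i = m then 1 else 0)
         - C (θ l) * MvPolynomial.aeval (fun i => (C (θ i) * X i : MvPolynomial (Fin n) ℝ))
              (mderiv (fun i => β i + if i = m then 1 else 0) p) *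
            monX (fun i => β i + if i = l then 1 else 0)))
    (hBt : Bt =
        MvPolynomial.aeval (fun i => (C (θ i) * X i : MvPolynomial (Fin n) ℝ))
            (MvPolynomial.pderiv l p) * (C (θ m) * X m)
        - MvPolynomial.aeval (fun i => (C (θ i) * X i : MvPolynomial (Fin n) ℝ))
            (MvPolynomial.pderiv m p) * (C (θ l) * X l)) :
    Xi = C (-(θ l * θ m)) * Bt :=
  stmt_17_general θ hθ l m k c p hp Xi Bt hXi hBt
end
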